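/- Under the hypotheses of the main theorem (f strongly convex with constant m_f and M_f-Lipschitz gradient; β^0 and β* in the column space of M₋ᵀ; ADMM updates as stated; u = (z; β), G = diag(cI, (1/c)I)), for any μ > 1, with δ = min{ ((μ−1)σ̃_min²(M₋))/(μσ_max²(M₊)), m_f / ( (c/4)σ_max²(M₊) + (μ/c)M_f²/σ̃_min²(M₋) ) } > 0, the iterates satisfy ‖u^{k+1} − u*‖_G² ≤ (1/(1+δ))‖u^k − u*‖_G² for all k. -/

import Mathlib

open Matrix
open scoped RealInnerProductSpace

/-- The largest singular value of a real matrix `M`: the supremum of `‖M y‖`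
over vectors `y` in the closed unit ball. -/
noncomputable def sigmaMax {a b : ℕ} (M : Matrix (Fin a) (Fin b) ℝ) : ℝ :=
  sSup ((fun y => ‖Matrix.toEuclideanLin M y‖) '' {y : EuclideanSpace ℝ (Fin b) | ‖y‖ ≤ 1})

/-- The smallest nonzero singular value of a real matrix `M`: the infimum of `‖M y‖`
over unit vectors `y` in the column space of `Mᵀ`. -/
noncomputable def sigmaMinPos {a b : ℕ} (M : Matrix (Fin a) (Fin b) ℝ) : ℝ :=
  sInf ((fun y => ‖Matrix.toEuclideanLin M y‖) ''
    {y : EuclideanSpace ℝ (Fin b) | ‖y‖ = 1 ∧ y ∈ LinearMap.range (Matrix.toEuclideanLin Mᵀ)})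


/-!
Write `u = (z, β)` and let primes denote the next iterate. Subtracting the KKT conditions from the
ADMM step and expanding the squares gives the energy identity
`c²‖z - z*‖² + ‖β - β*‖² - (c²‖z' - z*‖² + ‖β' - β*‖²)
  = c⟪∇f x' - ∇f x*, x' - x*⟫ + c²‖z - z'‖² + ‖β' - β‖²`.
By strong convexity the right side is at least `c m_f ‖x' - x*‖² + c²‖z - z'‖²`. This dominates
`δ (c²‖z' - z*‖² + ‖β' - β*‖²)`: the error `z' - z*` is `½ M₊ᵀ (x' - x*)`, and the error `β' - β*`
stays in the range of `M₋ᵀ` (it starts there and every increment of `β` lies there), so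
`σ̃_min(M₋) ‖β' - β*‖ ≤ ‖M₋ (β' - β*)‖`, which the step equation bounds by
`c σ_max(M₊) ‖z - z'‖ + M_f ‖x' - x*‖`.
-/

section SingularValues

open scoped Matrix.Norms.L2Operator

variable {a b : ℕ} (M : Matrix (Fin a) (Fin b) ℝ)

theorem sigmaMax_eq_l2_opNorm : sigmaMax M = ‖M‖ := by
  rw [l2_opNorm_def, ← ContinuousLinearMap.sSup_unitClosedBall_eq_norm]
  simp [sigmaMax, Metric.closedBall]

theorem norm_toEuclideanLin_le_sigmaMax (y : EuclideanSpace ℝ (Fin b)) :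
    ‖toEuclideanLin M y‖ ≤ sigmaMax M * ‖y‖ := by
  rw [sigmaMax_eq_l2_opNorm]
  exact ((toEuclideanLin.trans LinearMap.toContinuousLinearMap) M).le_opNorm y

theorem sigmaMax_transpose : sigmaMax Mᵀ = sigmaMax M := by
  rw [sigmaMax_eq_l2_opNorm, sigmaMax_eq_l2_opNorm, ← conjTranspose_eq_transpose_of_trivial,
    l2_opNorm_conjTranspose]

theorem sigmaMax_pos (hM : M ≠ 0) : 0 < sigmaMax M := by
  rw [sigmaMax_eq_l2_opNorm]
  exact norm_pos_iff.2 hM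

end SingularValues

theorem inner_toEuclideanLin_eq_inner_transpose {m n : Type*} [Fintype m] [Fintype n]
    [DecidableEq m] [DecidableEq n] (M : Matrix m n ℝ) (v : EuclideanSpace ℝ n)
    (w : EuclideanSpace ℝ m) :
    ⟪toEuclideanLin M v, w⟫ = ⟪v, toEuclideanLin Mᵀ w⟫ := by
  rw [← conjTranspose_eq_transpose_of_trivial, toEuclideanLin_conjTranspose_eq_adjoint,
    LinearMap.adjoint_inner_right]

section SmallestSingularValue

variable {a b : ℕ} (M : Matrix (Fin a) (Fin b) ℝ)

theorem eq_zero_of_mem_range_transpose_of_toEuclideanLin_eq_zero {y : EuclideanSpace ℝ (Fin b)}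
    (hy : y ∈ LinearMap.range (toEuclideanLin Mᵀ)) (hMy : toEuclideanLin M y = 0) : y = 0 := by
  obtain ⟨v, rfl⟩ := hy
  rw [← inner_self_eq_zero (𝕜 := ℝ), inner_toEuclideanLin_eq_inner_transpose, transpose_transpose,
    hMy, inner_zero_right]

theorem sigmaMinPos_mul_norm_le {y : EuclideanSpace ℝ (Fin b)}
    (hy : y ∈ LinearMap.range (toEuclideanLin Mᵀ)) :
    sigmaMinPos M * ‖y‖ ≤ ‖toEuclideanLin M y‖ := by
  rcases eq_or_ne y 0 with rfl | hy0
  · simp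
  have hle : sigmaMinPos M ≤ ‖toEuclideanLin M (‖y‖⁻¹ • y)‖ :=
    csInf_le ⟨0, by rintro r ⟨v, -, rfl⟩; positivity⟩
      ⟨_, ⟨norm_smul_inv_norm hy0, Submodule.smul_mem _ _ hy⟩, rfl⟩
  rw [map_smul, norm_smul, norm_inv, norm_norm, le_inv_mul_iff₀ (norm_pos_iff.2 hy0)] at hle
  linarith

theorem sigmaMinPos_pos (hM : M ≠ 0) : 0 < sigmaMinPos M := by
  set S := {y : EuclideanSpace ℝ (Fin b) | ‖y‖ = 1 ∧ y ∈ LinearMap.range (toEuclideanLin Mᵀ)}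
  have hS : IsCompact S := by
    have hS' : S = Metric.sphere 0 1 ∩ (LinearMap.range (toEuclideanLin Mᵀ) : Set _) := by
      ext y; simp [S]
    exact hS' ▸ (isCompact_sphere _ _).inter_right (Submodule.closed_of_finiteDimensional _)
  have hne : S.Nonempty := by
    obtain ⟨w, hw, hw0⟩ := Submodule.exists_mem_ne_zero_of_ne_bot (p := LinearMap.range
      (toEuclideanLin Mᵀ)) (by simpa [LinearMap.range_eq_bot] using hM)
    exact ⟨_, norm_smul_inv_norm hw0, Submodule.smul_mem _ _ hw⟩
  obtain ⟨y, ⟨hy1, hy⟩, hmin⟩ := hS.exists_sInf_image_eq hne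
    (LinearMap.continuous_of_finiteDimensional (toEuclideanLin M)).norm.continuousOn
  rw [sigmaMinPos, hmin, norm_pos_iff]
  intro hMy
  simp [eq_zero_of_mem_range_transpose_of_toEuclideanLin_eq_zero M hy hMy] at hy1

end SmallestSingularValue

theorem sub_mem_of_forall_succ_sub_mem {G S : Type*} [AddGroup G] [SetLike S G]
    [AddSubgroupClass S G] {s : S} {u : ℕ → G} {b : G} (h0 : u 0 - b ∈ s)
    (hstep : ∀ k, u (k + 1) - u k ∈ s) : ∀ k, u k - b ∈ s
  | 0 => h0
  | k + 1 => by
    simpa using add_mem (hstep k) (sub_mem_of_forall_succ_sub_mem h0 hstep k)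

theorem admm_energy_identity {m n : Type*} [Fintype m] [Fintype n] [DecidableEq m]
    [DecidableEq n] (Mp Mm : Matrix m n ℝ) (c : ℝ) (g x : EuclideanSpace ℝ m)
    {z z' zs β β' βs : EuclideanSpace ℝ n}
    (hg : g = c • toEuclideanLin Mp (z - z') - toEuclideanLin Mm (β' - βs))
    (hβ : β' - β = (c / 2) • toEuclideanLin Mmᵀ x)
    (hz : z' - zs = (1 / 2 : ℝ) • toEuclideanLin Mpᵀ x) :
    c * ⟪g, x⟫ + c ^ 2 * ‖z - z'‖ ^ 2 + ‖β' - β‖ ^ 2 + c ^ 2 * ‖z' - zs‖ ^ 2 + ‖β' - βs‖ ^ 2 =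
      c ^ 2 * ‖z - zs‖ ^ 2 + ‖β - βs‖ ^ 2 := by
  have hcross : c * ⟪g, x⟫ = 2 * c ^ 2 * ⟪z - z', z' - zs⟫ - 2 * ⟪β' - βs, β' - β⟫ := by
    rw [hg, hβ, hz, inner_sub_left, real_inner_smul_left, inner_toEuclideanLin_eq_inner_transpose,
      inner_toEuclideanLin_eq_inner_transpose, real_inner_smul_right, real_inner_smul_right]
    ring
  rw [show z - zs = (z - z') + (z' - zs) by abel, show β - βs = (β' - βs) - (β' - β) by abel,
    norm_add_sq_real, norm_sub_sq_real (β' - βs)]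
  linear_combination hcross

theorem admm_rate_inequality {c μ sp sm mf Mf δ X Z E B : ℝ} (hc : 0 < c) (hμ : 1 < μ)
    (hsp : 0 < sp) (hsm : 0 < sm) (hδ : 0 ≤ δ)
    (hδ₁ : δ ≤ (μ - 1) * sm ^ 2 / (μ * sp ^ 2))
    (hδ₂ : δ ≤ mf / (c / 4 * sp ^ 2 + μ / c * Mf ^ 2 / sm ^ 2))
    (hE : 0 ≤ E) (hB : 0 ≤ B) (hEX : 2 * E ≤ sp * X) (hBZX : sm * B ≤ c * sp * Z + Mf * X) :
    δ * (c ^ 2 * E ^ 2 + B ^ 2) ≤ mf * c * X ^ 2 + c ^ 2 * Z ^ 2 := by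
  have hδ₁' : δ * (μ * sp ^ 2) ≤ (μ - 1) * sm ^ 2 := (le_div_iff₀ (by positivity)).1 hδ₁
  have hδ₂' : δ * (c ^ 2 * sm ^ 2 * sp ^ 2 / 4 + μ * Mf ^ 2) ≤ mf * (c * sm ^ 2) := by
    calc δ * (c ^ 2 * sm ^ 2 * sp ^ 2 / 4 + μ * Mf ^ 2)
        = δ * (c / 4 * sp ^ 2 + μ / c * Mf ^ 2 / sm ^ 2) * (c * sm ^ 2) := by field_simp
      _ ≤ mf * (c * sm ^ 2) := by
        gcongr
        exact (le_div_iff₀ (by positivity)).1 hδ₂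
  have hE2 : (2 * E) ^ 2 ≤ (sp * X) ^ 2 := pow_le_pow_left₀ (by positivity) hEX 2
  -- Young's inequality `(a + b)² ≤ μ/(μ-1) a² + μ b²`, cleared of the denominator
  have hB2 : (μ - 1) * (sm * B) ^ 2 ≤ μ * (c * sp * Z) ^ 2 + (μ - 1) * μ * (Mf * X) ^ 2 := by
    have h := pow_le_pow_left₀ (by positivity) hBZX 2
    nlinarith [sq_nonneg (c * sp * Z - (μ - 1) * (Mf * X))]
  have hscaled : ((μ - 1) * sm ^ 2) * (δ * (c ^ 2 * E ^ 2 + B ^ 2)) ≤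
      ((μ - 1) * sm ^ 2) * (mf * c * X ^ 2 + c ^ 2 * Z ^ 2) := by
    linarith [mul_le_mul_of_nonneg_left hE2 (by positivity : 0 ≤ (μ - 1) * sm ^ 2 * δ * c ^ 2 / 4),
      mul_le_mul_of_nonneg_left hB2 hδ,
      mul_le_mul_of_nonneg_right hδ₁' (by positivity : 0 ≤ c ^ 2 * Z ^ 2),
      mul_le_mul_of_nonneg_left hδ₂' (by positivity : 0 ≤ (μ - 1) * X ^ 2)]
  exact le_of_mul_le_mul_left hscaled (by positivity)

theorem admm_step_contraction {n p : ℕ} {F : EuclideanSpace ℝ (Fin n) → EuclideanSpace ℝ (Fin n)}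
    {Mp Mm : Matrix (Fin n) (Fin p) ℝ} {mf Mf c μ δ : ℝ}
    {xs x' : EuclideanSpace ℝ (Fin n)} {zs βs z z' β β' : EuclideanSpace ℝ (Fin p)}
    (hsc : mf * ‖x' - xs‖ ^ 2 ≤ ⟪F x' - F xs, x' - xs⟫)
    (hlip : ‖F x' - F xs‖ ≤ Mf * ‖x' - xs‖)
    (hc : 0 < c) (hμ : 1 < μ) (hsp : 0 < sigmaMax Mp) (hsm : 0 < sigmaMinPos Mm) (hδ : 0 ≤ δ)
    (hδ₁ : δ ≤ (μ - 1) * sigmaMinPos Mm ^ 2 / (μ * sigmaMax Mp ^ 2))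
    (hδ₂ : δ ≤ mf / (c / 4 * sigmaMax Mp ^ 2 + μ / c * Mf ^ 2 / sigmaMinPos Mm ^ 2))
    (hKKT1 : F xs + toEuclideanLin Mm βs = 0)
    (hKKT2 : toEuclideanLin Mmᵀ xs = 0)
    (hKKT3 : (1 / 2 : ℝ) • toEuclideanLin Mpᵀ xs = zs)
    (h1 : F x' + toEuclideanLin Mm β' - c • toEuclideanLin Mp (z - z') = 0)
    (h2 : β' - β = (c / 2) • toEuclideanLin Mmᵀ x')
    (h3 : z' = (1 / 2 : ℝ) • toEuclideanLin Mpᵀ x')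
    (hβ' : β' - βs ∈ LinearMap.range (toEuclideanLin Mmᵀ)) :
    c * ‖z' - zs‖ ^ 2 + (1 / c) * ‖β' - βs‖ ^ 2 ≤
      1 / (1 + δ) * (c * ‖z - zs‖ ^ 2 + (1 / c) * ‖β - βs‖ ^ 2) := by
  have hF : F x' - F xs = c • toEuclideanLin Mp (z - z') - toEuclideanLin Mm (β' - βs) := by
    rw [map_sub (toEuclideanLin Mm)]
    linear_combination (norm := module) h1 - hKKT1
  have hβ : β' - β = (c / 2) • toEuclideanLin Mmᵀ (x' - xs) := by
    rw [map_sub, hKKT2, sub_zero, h2]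
  have hz : z' - zs = (1 / 2 : ℝ) • toEuclideanLin Mpᵀ (x' - xs) := by
    rw [map_sub, smul_sub, h3, hKKT3]
  have henergy := admm_energy_identity Mp Mm c _ _ hF hβ hz
  have hE : 2 * ‖z' - zs‖ ≤ sigmaMax Mp * ‖x' - xs‖ := by
    have h := norm_toEuclideanLin_le_sigmaMax Mpᵀ (x' - xs)
    rw [sigmaMax_transpose] at h
    rw [hz, norm_smul, Real.norm_of_nonneg (by norm_num)]
    linarith
  have hB : sigmaMinPos Mm * ‖β' - βs‖ ≤
      c * sigmaMax Mp * ‖z - z'‖ + Mf * ‖x' - xs‖ :=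
    calc sigmaMinPos Mm * ‖β' - βs‖ ≤ ‖toEuclideanLin Mm (β' - βs)‖ :=
          sigmaMinPos_mul_norm_le Mm hβ'
      _ = ‖c • toEuclideanLin Mp (z - z') - (F x' - F xs)‖ := by rw [hF, sub_sub_cancel]
      _ ≤ c * ‖toEuclideanLin Mp (z - z')‖ + ‖F x' - F xs‖ := by
          rw [← norm_smul_of_nonneg hc.le]
          exact norm_sub_le _ _
      _ ≤ c * sigmaMax Mp * ‖z - z'‖ + Mf * ‖x' - xs‖ := by
          rw [mul_assoc]
          gcongr
          exact norm_toEuclideanLin_le_sigmaMax Mp _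
  have hrate := admm_rate_inequality hc hμ hsp hsm hδ hδ₁ hδ₂ (norm_nonneg _) (norm_nonneg _) hE hB
  have hcontract : (1 + δ) * (c ^ 2 * ‖z' - zs‖ ^ 2 + ‖β' - βs‖ ^ 2) ≤
      c ^ 2 * ‖z - zs‖ ^ 2 + ‖β - βs‖ ^ 2 := by
    linarith [mul_le_mul_of_nonneg_left hsc hc.le, sq_nonneg ‖β' - β‖]
  rw [one_div_mul_eq_div (1 + δ), le_div_iff₀ (by linarith)]
  calc (c * ‖z' - zs‖ ^ 2 + 1 / c * ‖β' - βs‖ ^ 2) * (1 + δ)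
      = (1 + δ) * (c ^ 2 * ‖z' - zs‖ ^ 2 + ‖β' - βs‖ ^ 2) / c := by field_simp
    _ ≤ (c ^ 2 * ‖z - zs‖ ^ 2 + ‖β - βs‖ ^ 2) / c := by gcongr
    _ = c * ‖z - zs‖ ^ 2 + 1 / c * ‖β - βs‖ ^ 2 := by field_simp

theorem stmt_19_general (n p : ℕ) (f : EuclideanSpace ℝ (Fin n) → ℝ)
    (Mp Mm : Matrix (Fin n) (Fin p) ℝ) (hMp : Mp ≠ 0) (hMm : Mm ≠ 0)
    (mf Mf : ℝ) (hmf : 0 < mf)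
    -- strong convexity and Lipschitz continuity of the gradient
    (hsc : ∀ a b : EuclideanSpace ℝ (Fin n),
      ⟪gradient f a - gradient f b, a - b⟫ ≥ mf * ‖a - b‖ ^ 2)
    (hlip : ∀ a b : EuclideanSpace ℝ (Fin n),
      ‖gradient f a - gradient f b‖ ≤ Mf * ‖a - b‖)
    (c μ : ℝ) (hc : 0 < c) (hμ : 1 < μ)
    -- the KKT point
    (xstar : EuclideanSpace ℝ (Fin n)) (zstar βstar : EuclideanSpace ℝ (Fin p))
    (hKKT1 : gradient f xstar + (Matrix.toEuclideanLin Mm) βstar = 0)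
    (hKKT2 : (Matrix.toEuclideanLin Mmᵀ) xstar = 0)
    (hKKT3 : (1 / 2 : ℝ) • (Matrix.toEuclideanLin Mpᵀ) xstar = zstar)
    (hβstar : βstar ∈ LinearMap.range (Matrix.toEuclideanLin Mmᵀ))
    -- the ADMM iterates
    (x : ℕ → EuclideanSpace ℝ (Fin n)) (z β : ℕ → EuclideanSpace ℝ (Fin p))
    (hβ0 : β 0 ∈ LinearMap.range (Matrix.toEuclideanLin Mmᵀ))
    (h1 : ∀ k, gradient f (x (k + 1)) + (Matrix.toEuclideanLin Mm) (β (k + 1)) -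
      c • (Matrix.toEuclideanLin Mp) (z k - z (k + 1)) = 0)
    (h2 : ∀ k, β (k + 1) - β k = (c / 2) • (Matrix.toEuclideanLin Mmᵀ) (x (k + 1)))
    (h3 : ∀ k, z k = (1 / 2 : ℝ) • (Matrix.toEuclideanLin Mpᵀ) (x k))
    -- the linear rate constant
    (δ : ℝ)
    (hδ : δ = min ((μ - 1) * sigmaMinPos Mm ^ 2 / (μ * sigmaMax Mp ^ 2))
      (mf / (c / 4 * sigmaMax Mp ^ 2 + μ / c * Mf ^ 2 / sigmaMinPos Mm ^ 2))) :
    0 < δ ∧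
    ∀ k, c * ‖z (k + 1) - zstar‖ ^ 2 + (1 / c) * ‖β (k + 1) - βstar‖ ^ 2 ≤
      1 / (1 + δ) * (c * ‖z k - zstar‖ ^ 2 + (1 / c) * ‖β k - βstar‖ ^ 2) := by
  have hsp := sigmaMax_pos Mp hMp
  have hsm := sigmaMinPos_pos Mm hMm
  have hδ₀ : 0 < δ := hδ ▸ lt_min (by positivity) (by positivity)
  have hrange : ∀ k, β k - βstar ∈ LinearMap.range (toEuclideanLin Mmᵀ) :=
    sub_mem_of_forall_succ_sub_mem (sub_mem hβ0 hβstar)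
      fun k => h2 k ▸ Submodule.smul_mem _ _ ⟨_, rfl⟩
  refine ⟨hδ₀, fun k => ?_⟩
  exact admm_step_contraction (hsc _ _) (hlip _ _) hc hμ hsp hsm hδ₀.le (hδ ▸ min_le_left _ _)
    (hδ ▸ min_le_right _ _) hKKT1 hKKT2 hKKT3 (h1 k) (h2 k) (h3 (k + 1)) (hrange (k + 1))

theorem stmt_19 (n p : ℕ) (f : EuclideanSpace ℝ (Fin n) → ℝ) (hdiff : Differentiable ℝ f)
    (Mp Mm : Matrix (Fin n) (Fin p) ℝ) (hMp : Mp ≠ 0) (hMm : Mm ≠ 0)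
    (mf Mf : ℝ) (hmf : 0 < mf) (hMf : 0 < Mf)
    -- strong convexity and Lipschitz continuity of the gradient
    (hsc : ∀ a b : EuclideanSpace ℝ (Fin n),
      ⟪gradient f a - gradient f b, a - b⟫ ≥ mf * ‖a - b‖ ^ 2)
    (hlip : ∀ a b : EuclideanSpace ℝ (Fin n),
      ‖gradient f a - gradient f b‖ ≤ Mf * ‖a - b‖)
    (c μ : ℝ) (hc : 0 < c) (hμ : 1 < μ)
    -- the KKT point
    (xstar : EuclideanSpace ℝ (Fin n)) (zstar βstar : EuclideanSpace ℝ (Fin p))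
    (hKKT1 : gradient f xstar + (Matrix.toEuclideanLin Mm) βstar = 0)
    (hKKT2 : (Matrix.toEuclideanLin Mmᵀ) xstar = 0)
    (hKKT3 : (1 / 2 : ℝ) • (Matrix.toEuclideanLin Mpᵀ) xstar = zstar)
    (hβstar : βstar ∈ LinearMap.range (Matrix.toEuclideanLin Mmᵀ))
    -- the ADMM iterates
    (x : ℕ → EuclideanSpace ℝ (Fin n)) (z β : ℕ → EuclideanSpace ℝ (Fin p))
    (hβ0 : β 0 ∈ LinearMap.range (Matrix.toEuclideanLin Mmᵀ))
    (h1 : ∀ k, gradient f (x (k + 1)) + (Matrix.toEuclideanLin Mm) (β (k + 1)) -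
      c • (Matrix.toEuclideanLin Mp) (z k - z (k + 1)) = 0)
    (h2 : ∀ k, β (k + 1) - β k = (c / 2) • (Matrix.toEuclideanLin Mmᵀ) (x (k + 1)))
    (h3 : ∀ k, z k = (1 / 2 : ℝ) • (Matrix.toEuclideanLin Mpᵀ) (x k))
    -- the linear rate constant
    (δ : ℝ)
    (hδ : δ = min ((μ - 1) * sigmaMinPos Mm ^ 2 / (μ * sigmaMax Mp ^ 2))
      (mf / (c / 4 * sigmaMax Mp ^ 2 + μ / c * Mf ^ 2 / sigmaMinPos Mm ^ 2))) :
    0 < δ ∧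
    ∀ k, c * ‖z (k + 1) - zstar‖ ^ 2 + (1 / c) * ‖β (k + 1) - βstar‖ ^ 2 ≤
      1 / (1 + δ) * (c * ‖z k - zstar‖ ^ 2 + (1 / c) * ‖β k - βstar‖ ^ 2) :=
  stmt_19_general n p f Mp Mm hMp hMm mf Mf hmf hsc hlip c μ hc hμ xstar zstar βstar hKKT1 hKKT2
    hKKT3 hβstar x z β hβ0 h1 h2 h3 δ hδ
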